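/- arXiv:2503.02551 — 2 statements merged into one kernel-verified Lean document; each statement's English description precedes it below -/
import Mathlib

section
/- Let ρ₀ > 0, σ > 0, θ ∈ (0, 2], k ≥ 1, γ ≥ σ(σ+1)/ρ₀, and ρ : [0,∞) → ℝ with ρ(r) ≥ ρ₀ (r + k)^(-θ) for all r ≥ 0. Define κ(r, t) = e^(-γ t) (r + k)^(-σ). Then for all r ≥ 0 and t ≥ 0: (a) ρ(r) ∂_t κ(r,t) + (∂_r κ(r,t))² / κ(r,t) ≤ 0, and (b) ρ(r) ∂_t κ(r,t) + ∂²_r κ(r,t) ≤ 0. -/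
open Real

private lemma aux_hasDerivAt (k p : ℝ) {x : ℝ} (hx : 0 < x + k) :
    HasDerivAt (fun y => (y + k) ^ p) (p * (x + k) ^ (p - 1)) x := by
  have h := (Real.hasDerivAt_rpow_const (p := p) (x := x + k)
    (Or.inl hx.ne')).comp x ((hasDerivAt_id x).add_const k)
  exact h.congr_deriv (by ring)

/-- Lemma 6.2 on a single edge: with `κ(r,t) = e^(-γt)(r+k)^(-σ)`,
`ρ(r) ≥ ρ₀ (r+k)^(-θ)`, `0 < θ ≤ 2`, `k ≥ 1`, `γ ≥ σ(σ+1)/ρ₀`, for all `r, t ≥ 0`: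
(a) `ρ ∂_t κ + (∂_r κ)²/κ ≤ 0` and (b) `ρ ∂_t κ + ∂²_r κ ≤ 0`. -/
theorem stmt7 (ρ₀ σ θ k γ : ℝ) (hρ₀ : 0 < ρ₀) (hσ : 0 < σ) (hθ : 0 < θ) (hθ2 : θ ≤ 2)
    (hk : 1 ≤ k) (hγ : σ * (σ + 1) / ρ₀ ≤ γ)
    (ρ : ℝ → ℝ) (hρ : ∀ r : ℝ, 0 ≤ r → ρ₀ * (r + k) ^ (-θ) ≤ ρ r)
    (r t : ℝ) (hr : 0 ≤ r) (ht : 0 ≤ t) :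
    (ρ r * deriv (fun s => Real.exp (-γ * s) * (r + k) ^ (-σ)) t +
        (deriv (fun y => Real.exp (-γ * t) * (y + k) ^ (-σ)) r) ^ 2 /
          (Real.exp (-γ * t) * (r + k) ^ (-σ)) ≤ 0) ∧
    (ρ r * deriv (fun s => Real.exp (-γ * s) * (r + k) ^ (-σ)) t +
        deriv (deriv (fun y => Real.exp (-γ * t) * (y + k) ^ (-σ))) r ≤ 0) := by
  set E : ℝ := Real.exp (-γ * t) with hE
  have hEpos : 0 < E := Real.exp_pos _
  have hA : 0 < r + k := by linarith
  have hA1 : 1 ≤ r + k := by linarith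
  set P : ℝ := r + k with hP
  -- time derivative
  have hDt : deriv (fun s => Real.exp (-γ * s) * (r + k) ^ (-σ)) t
      = -γ * (E * P ^ (-σ)) := by
    have h1 : HasDerivAt (fun s => Real.exp (-γ * s)) (Real.exp (-γ * t) * (-γ)) t := by
      have := (Real.hasDerivAt_exp (-γ * t)).comp t ((hasDerivAt_id t).const_mul (-γ))
      exact this.congr_deriv (by ring)
    have h2 := h1.mul_const ((r + k) ^ (-σ))
    rw [h2.deriv]; ring
  -- first space derivative
  have hDr : deriv (fun y => Real.exp (-γ * t) * (y + k) ^ (-σ)) r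
      = E * (-σ * P ^ (-σ - 1)) := by
    exact ((aux_hasDerivAt k (-σ) hA).const_mul E).deriv
  -- second space derivative
  have hDrr : deriv (deriv (fun y => Real.exp (-γ * t) * (y + k) ^ (-σ))) r
      = E * (σ * (σ + 1) * P ^ (-σ - 2)) := by
    have hnb : ∀ᶠ y in nhds r, -k < y := eventually_gt_nhds (by linarith)
    have heq : deriv (fun y => Real.exp (-γ * t) * (y + k) ^ (-σ))
        =ᶠ[nhds r] fun y => (E * -σ) * (y + k) ^ (-σ - 1) := by
      filter_upwards [hnb] with y hy
      have hy' : 0 < y + k := by linarith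
      have := ((aux_hasDerivAt k (-σ) hy').const_mul E).deriv
      rw [this]; ring
    rw [heq.deriv_eq]
    have h := ((aux_hasDerivAt k (-σ - 1) hA).const_mul (E * -σ)).deriv
    rw [h]
    have : (-σ - 1 - 1 : ℝ) = -σ - 2 := by ring
    rw [this]; ring
  rw [hDt, hDr, hDrr]
  -- key facts
  have hPθ : P ^ (-2 : ℝ) ≤ P ^ (-θ) :=
    Real.rpow_le_rpow_of_exponent_le hA1 (by linarith)
  have hρpos : 0 < ρ r :=
    lt_of_lt_of_le (by positivity) (hρ r hr)
  have hσσ : 0 ≤ σ * (σ + 1) := by positivity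
  have h1 : σ * (σ + 1) * P ^ (-2 : ℝ) ≤ ρ r * γ := by
    have hb : σ * (σ + 1) * P ^ (-θ) = (ρ₀ * P ^ (-θ)) * (σ * (σ + 1) / ρ₀) := by
      field_simp
    have hγ0 : 0 ≤ σ * (σ + 1) / ρ₀ := by positivity
    calc σ * (σ + 1) * P ^ (-2 : ℝ) ≤ σ * (σ + 1) * P ^ (-θ) :=
          mul_le_mul_of_nonneg_left hPθ hσσ
      _ = (ρ₀ * P ^ (-θ)) * (σ * (σ + 1) / ρ₀) := hb
      _ ≤ ρ r * γ := mul_le_mul (hρ r hr) hγ hγ0 hρpos.le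
  have hEP : 0 < E * P ^ (-σ) := by positivity
  have hcomb : P ^ (-2 : ℝ) * P ^ (-σ) = P ^ (-σ - 2) := by
    rw [← Real.rpow_add hA]; ring_nf
  have hkey : σ * (σ + 1) * (E * P ^ (-σ - 2)) ≤ ρ r * γ * (E * P ^ (-σ)) := by
    have := mul_le_mul_of_nonneg_right h1 hEP.le
    calc σ * (σ + 1) * (E * P ^ (-σ - 2))
        = σ * (σ + 1) * P ^ (-2 : ℝ) * (E * P ^ (-σ)) := by
          rw [show σ * (σ + 1) * P ^ (-2:ℝ) * (E * P ^ (-σ))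
              = σ * (σ + 1) * (E * (P ^ (-2:ℝ) * P ^ (-σ))) by ring, hcomb]
      _ ≤ ρ r * γ * (E * P ^ (-σ)) := this
  constructor
  · -- (a)
    have hsq : (E * (-σ * P ^ (-σ - 1))) ^ 2 / (E * P ^ (-σ))
        = σ ^ 2 * (E * P ^ (-σ - 2)) := by
      have hne : E * P ^ (-σ) ≠ 0 := hEP.ne'
      rw [div_eq_iff hne]
      have h2 : P ^ (-σ - 1) * P ^ (-σ - 1) = P ^ (-σ - 2) * P ^ (-σ) := by
        rw [← Real.rpow_add hA, ← Real.rpow_add hA]; ring_nf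
      rw [show (E * (-σ * P ^ (-σ - 1))) ^ 2
          = σ ^ 2 * E * E * (P ^ (-σ - 1) * P ^ (-σ - 1)) by ring, h2]
      ring
    rw [hsq]
    have hσ2 : σ ^ 2 * (E * P ^ (-σ - 2)) ≤ σ * (σ + 1) * (E * P ^ (-σ - 2)) := by
      have : 0 ≤ E * P ^ (-σ - 2) := by positivity
      nlinarith
    nlinarith [hkey, hσ2]
  · -- (b)
    nlinarith [hkey]
end

section
/- Let u : ℝ → ℝ be C² with u'' = V u on ℝ where V(x) ≥ V₀ > 0, and suppose u ∈ L^p(ℝ) for some p ≥ 2 (unweighted). Then u ≡ 0. -/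
open Real MeasureTheory

/-- a `C²` solution of `u'' = V u` on ℝ with `V ≥ V₀ > 0` which lies in the
unweighted `L^p(ℝ)` for some `p ≥ 2` vanishes identically. -/
theorem stmt13 (p V₀ : ℝ) (hp : 2 ≤ p) (hV₀ : 0 < V₀)
    (V u : ℝ → ℝ) (hV : ∀ x, V₀ ≤ V x) (hu : ContDiff ℝ 2 u)
    (heq : ∀ x, deriv (deriv u) x = V x * u x)
    (hint : Integrable (fun x => |u x| ^ p)) :
    ∀ x, u x = 0 := by
  have hud : Differentiable ℝ u := hu.differentiable (by norm_num)
  have hu1 : ContDiff ℝ 1 (deriv u) := by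
    have h2 : ContDiff ℝ ((1 : ℕ) + 1) u := by exact_mod_cast hu
    exact (contDiff_succ_iff_deriv.mp h2).2.2
  have hu'd : Differentiable ℝ (deriv u) := hu1.differentiable (by norm_num)
  set f : ℝ → ℝ := fun x => u x * u x with hfdef
  have hfd : Differentiable ℝ f := hud.mul hud
  have hderiv_f : deriv f = fun x => 2 * (u x * deriv u x) := by
    funext x
    rw [hfdef, deriv_fun_mul (hud x) (hud x)]
    ring
  have hderiv_f_diff : Differentiable ℝ (deriv f) := by
    rw [hderiv_f]
    exact (hud.mul hu'd).const_mul 2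
  have hderiv2 : ∀ x, deriv (deriv f) x = 2 * (deriv u x * deriv u x + u x * (V x * u x)) := by
    intro x
    rw [hderiv_f, deriv_const_mul (d := fun y => u y * deriv u y) _ ((hud x).mul (hu'd x)),
      deriv_fun_mul (hud x) (hu'd x), heq x]
  have hconv : ConvexOn ℝ Set.univ f := by
    apply convexOn_of_deriv2_nonneg convex_univ hfd.continuous.continuousOn
      hfd.differentiableOn hderiv_f_diff.differentiableOn
    intro x _
    have : deriv^[2] f x = deriv (deriv f) x := rfl
    rw [this, hderiv2 x]
    nlinarith [sq_nonneg (deriv u x), sq_nonneg (u x), hV x, hV₀.le]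
  -- suppose u x₀ ≠ 0
  by_contra hcon
  push_neg at hcon
  obtain ⟨x₀, hx₀⟩ := hcon
  set c : ℝ := f x₀ with hc
  have hc0 : 0 < c := mul_self_pos.mpr hx₀
  -- f ≥ c on a half line
  have key : ∃ S : Set ℝ, MeasurableSet S ∧ volume S = ⊤ ∧ ∀ x ∈ S, c ≤ f x := by
    by_cases hcase : c ≤ f (x₀ + 1)
    · refine ⟨Set.Ici (x₀ + 1), measurableSet_Ici, Real.volume_Ici, ?_⟩
      intro z hz
      rcases eq_or_lt_of_le (Set.mem_Ici.mp hz) with h | h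
      · rw [← h]; exact hcase
      · have hzx : (0:ℝ) < z - x₀ := by linarith
        have ha0 : (0:ℝ) ≤ (z - (x₀ + 1)) / (z - x₀) := div_nonneg (by linarith) hzx.le
        have hb0 : (0:ℝ) < 1 / (z - x₀) := by positivity
        have hab : (z - (x₀ + 1)) / (z - x₀) + 1 / (z - x₀) = 1 := by field_simp; ring
        have hcvx := hconv.2 (Set.mem_univ x₀) (Set.mem_univ z) ha0 hb0.le hab
        simp only [smul_eq_mul] at hcvx
        have hpt : (z - (x₀ + 1)) / (z - x₀) * x₀ + 1 / (z - x₀) * z = x₀ + 1 := by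
          field_simp; ring
        rw [hpt] at hcvx
        have h2 : (z - (x₀ + 1)) / (z - x₀) = 1 - 1 / (z - x₀) := by field_simp; ring
        have h3 : (z - (x₀ + 1)) / (z - x₀) * f x₀ = f x₀ - 1 / (z - x₀) * f x₀ := by
          rw [h2]; ring
        have h4 : 1 / (z - x₀) * c ≤ 1 / (z - x₀) * f z := by
          simp only [hc]; linarith [hcase, hcvx, h3]
        exact le_of_mul_le_mul_left h4 hb0
    · push_neg at hcase
      refine ⟨Set.Iic x₀, measurableSet_Iic, Real.volume_Iic, ?_⟩
      intro z hz
      rcases eq_or_lt_of_le (Set.mem_Iic.mp hz) with h | h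
      · rw [h]
      · have hzx : (0:ℝ) < x₀ + 1 - z := by linarith
        have ha0 : (0:ℝ) < 1 / (x₀ + 1 - z) := by positivity
        have hb0 : (0:ℝ) ≤ (x₀ - z) / (x₀ + 1 - z) := div_nonneg (by linarith) hzx.le
        have hab : 1 / (x₀ + 1 - z) + (x₀ - z) / (x₀ + 1 - z) = 1 := by field_simp; ring
        have hcvx := hconv.2 (Set.mem_univ z) (Set.mem_univ (x₀ + 1)) ha0.le hb0 hab
        simp only [smul_eq_mul] at hcvx
        have hpt : 1 / (x₀ + 1 - z) * z + (x₀ - z) / (x₀ + 1 - z) * (x₀ + 1) = x₀ := by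
          field_simp; ring
        rw [hpt] at hcvx
        have h2 : (x₀ - z) / (x₀ + 1 - z) = 1 - 1 / (x₀ + 1 - z) := by field_simp; ring
        have h5 : (x₀ - z) / (x₀ + 1 - z) * f (x₀ + 1) ≤ (x₀ - z) / (x₀ + 1 - z) * c :=
          mul_le_mul_of_nonneg_left hcase.le hb0
        have h3 : (1 - 1 / (x₀ + 1 - z)) * c = c - 1 / (x₀ + 1 - z) * c := by ring
        have h4 : 1 / (x₀ + 1 - z) * c ≤ 1 / (x₀ + 1 - z) * f z := by
          simp only [hc] at *; nlinarith [hcvx, h5, h2]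
        exact le_of_mul_le_mul_left h4 ha0
  obtain ⟨S, hSm, hSvol, hSf⟩ := key
  -- |u x| ^ p = (f x) ^ (p/2)
  have hp2 : 0 < p / 2 := by linarith
  have habs : ∀ x, |u x| ^ p = (f x) ^ (p / 2) := by
    intro x
    have h1 : f x = |u x| ^ (2:ℝ) := by
      rw [show ((2:ℝ)) = ((2:ℕ):ℝ) from by norm_num, Real.rpow_natCast, sq_abs]
      simp only [hfdef]; ring
    rw [h1, ← Real.rpow_mul (abs_nonneg _)]
    congr 1
    ring
  -- constant c^(p/2) is integrable on S
  have hbound : ∀ x ∈ S, c ^ (p / 2) ≤ |u x| ^ p := by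
    intro x hx
    rw [habs x]
    exact Real.rpow_le_rpow hc0.le (hSf x hx) hp2.le
  have hconst : IntegrableOn (fun _ : ℝ => c ^ (p / 2)) S := by
    apply Integrable.mono (hint.integrableOn (s := S)) aestronglyMeasurable_const
    filter_upwards [ae_restrict_mem hSm] with x hx
    have h1 : (0:ℝ) ≤ c ^ (p/2) := by positivity
    have h2 : (0:ℝ) ≤ |u x| ^ p := Real.rpow_nonneg (abs_nonneg _) _
    rw [Real.norm_eq_abs, Real.norm_eq_abs, abs_of_nonneg h1, abs_of_nonneg h2]
    exact hbound x hx
  rcases ((integrableOn_const_iff (C := c ^ (p / 2))).mp hconst) with h | h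
  · have : (0:ℝ) < c ^ (p/2) := Real.rpow_pos_of_pos hc0 _
    simp [enorm_eq_zero.mp h] at this
  · rw [hSvol] at h
    exact absurd h (by simp)
end
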